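/- arXiv:0904.1489 — 2 statements merged into one kernel-verified Lean document; each statement's English description precedes it below -/
import Mathlib

section
/- Let t0 > 0 and let u : [t0, ∞) → (0, ∞) be continuously differentiable with u(t0) = u0 > 0. Suppose q_- , q_+ : [t0, ∞) → [0,1] are continuous, q_+(t) → 0 as t → ∞, and q_-(t)·u(t)/t ≤ u'(t) ≤ q_+(t)·u(t)/t for all t ≥ t0. Then lim_{t→∞} u(t)/t = 0. -/
open Real Filter

theorem stmt2 (t0 u0 : ℝ) (ht0 : 0 < t0) (hu0 : 0 < u0)
    (u u' : ℝ → ℝ) (qm qp : ℝ → ℝ)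
    (hu_deriv : ∀ t ≥ t0, HasDerivAt u (u' t) t)
    (hu'_cont : ContinuousOn u' (Set.Ici t0))
    (hu_pos : ∀ t ≥ t0, 0 < u t) (hu_init : u t0 = u0)
    (hqm_cont : ContinuousOn qm (Set.Ici t0))
    (hqp_cont : ContinuousOn qp (Set.Ici t0))
    (hqm_mem : ∀ t ≥ t0, qm t ∈ Set.Icc (0:ℝ) 1)
    (hqp_mem : ∀ t ≥ t0, qp t ∈ Set.Icc (0:ℝ) 1)
    (hqp_lim : Tendsto qp atTop (nhds 0))
    (hineq : ∀ t ≥ t0, qm t * u t / t ≤ u' t ∧ u' t ≤ qp t * u t / t) :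
    Tendsto (fun t => u t / t) atTop (nhds 0) := by
  -- find T ≥ t0 with qp t ≤ 1/2 for t ≥ T
  have hev : ∀ᶠ t in atTop, qp t < 1/2 := hqp_lim.eventually_lt_const (by norm_num)
  obtain ⟨T0, hT0⟩ := eventually_atTop.1 hev
  set T : ℝ := max T0 t0 with hTdef
  have hTt0 : t0 ≤ T := le_max_right _ _
  have hTpos : 0 < T := lt_of_lt_of_le ht0 hTt0
  set f : ℝ → ℝ := fun t => u t * t ^ (-(1/2) : ℝ) with hf
  -- derivative of f
  have hfd : ∀ x, T < x → HasDerivAt f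
      (u' x * x ^ (-(1/2):ℝ) + u x * (-(1/2) * x ^ ((-(1/2):ℝ) - 1))) x := by
    intro x hx
    have hxpos : 0 < x := hTpos.trans hx
    exact ((hu_deriv x (hTt0.trans hx.le)).mul
      (Real.hasDerivAt_rpow_const (p := (-(1/2):ℝ)) (Or.inl hxpos.ne')))
  have hderiv_nonpos : ∀ x ∈ interior (Set.Ici T), deriv f x ≤ 0 := by
    intro x hx
    rw [interior_Ici] at hx
    have hxpos : 0 < x := hTpos.trans hx
    have hxt0 : t0 ≤ x := hTt0.trans hx.le
    rw [(hfd x hx).deriv]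
    have hq : qp x < 1/2 := hT0 x ((le_max_left T0 t0).trans hx.le)
    have hu'le : u' x ≤ qp x * u x / x := (hineq x hxt0).2
    have hup : 0 < u x := hu_pos x hxt0
    have h1 : (0:ℝ) < x ^ (-(1/2):ℝ) := Real.rpow_pos_of_pos hxpos _
    have h2 : x ^ ((-(1/2):ℝ) - 1) = x ^ (-(1/2):ℝ) * x⁻¹ := by
      rw [show ((-(1/2):ℝ)) - 1 = -(1/2) + (-1) by ring, Real.rpow_add hxpos,
        Real.rpow_neg_one]
    rw [h2]
    have h3 : u' x * x ^ (-(1/2):ℝ) ≤ (qp x * u x / x) * x ^ (-(1/2):ℝ) :=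
      mul_le_mul_of_nonneg_right hu'le h1.le
    have hxinv : x⁻¹ = 1 / x := by rw [inv_eq_one_div]
    have hqn : 0 ≤ qp x := (hqp_mem x hxt0).1
    have key : qp x * u x / x ≤ (1/2) * u x / x := by
      gcongr <;> nlinarith
    have h4 : u' x * x ^ (-(1/2):ℝ) ≤ ((1/2) * u x / x) * x ^ (-(1/2):ℝ) :=
      h3.trans (mul_le_mul_of_nonneg_right key h1.le)
    have h5 : ((1/2) * u x / x) * x ^ (-(1/2):ℝ)
        = -(u x * (-(1/2) * (x ^ (-(1/2):ℝ) * x⁻¹))) := by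
      field_simp
    rw [h5] at h4; linarith
  have hcont : ContinuousOn f (Set.Ici T) := by
    apply ContinuousOn.mul
    · intro t ht
      exact (hu_deriv t (hTt0.trans ht)).continuousAt.continuousWithinAt
    · exact continuousOn_id.rpow_const fun t ht =>
        Or.inl (ne_of_gt (hTpos.trans_le ht))
  have hanti : AntitoneOn f (Set.Ici T) := by
    apply antitoneOn_of_deriv_nonpos (convex_Ici T) hcont _ hderiv_nonpos
    intro x hx
    rw [interior_Ici] at hx
    exact (hfd x hx).differentiableAt.differentiableWithinAt
  set C : ℝ := u T * T ^ (-(1/2):ℝ) with hC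
  have hbound : ∀ t ≥ T, u t / t ≤ C * t ^ (-(1/2):ℝ) := by
    intro t ht
    have htpos : 0 < t := hTpos.trans_le ht
    have hft : f t ≤ C := hanti Set.self_mem_Ici ht ht
    have h1 : (0:ℝ) ≤ t ^ (-(1/2):ℝ) := (Real.rpow_pos_of_pos htpos _).le
    have h2 : u t / t = f t * t ^ (-(1/2):ℝ) := by
      have : t ^ (-(1/2):ℝ) * t ^ (-(1/2):ℝ) = t⁻¹ := by
        rw [← Real.rpow_add htpos, show (-(1/2):ℝ) + (-(1/2)) = -1 by ring,
          Real.rpow_neg_one]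
      rw [hf, div_eq_mul_inv, ← this]; ring
    rw [h2]
    exact mul_le_mul_of_nonneg_right hft h1
  have hupper : Tendsto (fun t : ℝ => C * t ^ (-(1/2):ℝ)) atTop (nhds 0) := by
    have := (tendsto_rpow_neg_atTop (y := (1/2:ℝ)) (by norm_num)).const_mul C
    simpa using this
  apply tendsto_of_tendsto_of_tendsto_of_le_of_le' tendsto_const_nhds hupper
  · filter_upwards [eventually_ge_atTop t0] with t ht
    exact div_nonneg (hu_pos t ht).le ((ht0.trans_le ht).le)
  · filter_upwards [eventually_ge_atTop T] with t ht
    exact hbound t ht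
end

section
/- Let t0 > 0, u0 > 0, and suppose F : [t0,∞) × ℝ → [0,∞) and q_+ : [t0,∞) → [0,1] are continuous with q_+(t) → 0 as t → ∞. Suppose u : [t0,∞) → (0,∞) is a C² solution of u'' + F(t, u) = 0 with u(t0) = u0 and 0 ≤ u'(t)/u(t) ≤ q_+(t)/t for all t ≥ t0. Then: (i) u is nondecreasing; (ii) u(t) = o(t) as t → ∞; (iii) u(t)/t ≤ u0/t0 for all t ≥ t0. -/
open Real Filter Set Asymptotics

/-!
Since `u > 0`, the bound `u'/u ≤ q₊(t)/t` reads `t u' ≤ q₊ u`. For any `c ≥ q₊` the quotient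
`u(t)/t^c` then has derivative `t^(c-1) (t u' - c u) / t^(2c) ≤ 0`. As `q₊ ≤ 1`, the case `c = 1`
gives (iii); as `q₊ → 0`, the case `c = 1/2` applies for large `t` and gives `u = O(√t) = o(t)`.
-/

theorem antitoneOn_div_rpow_of_mul_deriv_le {u : ℝ → ℝ} {a c : ℝ} (ha : 0 < a)
    (hu : ContinuousOn u (Ici a)) (hu' : DifferentiableOn ℝ u (Ioi a))
    (h : ∀ t ∈ Ioi a, t * deriv u t ≤ c * u t) :
    AntitoneOn (fun t => u t / t ^ c) (Ici a) := by
  refine antitoneOn_of_hasDerivWithinAt_nonpos (convex_Ici a)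
    (hu.div (continuousOn_id.rpow_const fun t ht => .inl (ha.trans_le ht).ne')
      fun t ht => (rpow_pos_of_pos (ha.trans_le ht) c).ne')
    (f' := fun t => (deriv u t * t ^ c - u t * (c * t ^ (c - 1))) / (t ^ c) ^ 2) ?_ ?_
  <;> intro t ht <;> rw [interior_Ici] at ht <;> have ht0 : 0 < t := ha.trans ht
  · exact (((hu'.differentiableAt (Ioi_mem_nhds ht)).hasDerivAt.div
      (hasDerivAt_rpow_const (.inl ht0.ne')) (rpow_pos_of_pos ht0 c).ne')).hasDerivWithinAt
  · have hsplit : t ^ c = t * t ^ (c - 1) := by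
      conv_lhs => rw [show c = 1 + (c - 1) by ring, rpow_add ht0, rpow_one]
    have hnum : deriv u t * t ^ c - u t * (c * t ^ (c - 1)) =
        t ^ (c - 1) * (t * deriv u t - c * u t) := by
      rw [hsplit]; ring
    rw [hnum]
    exact div_nonpos_of_nonpos_of_nonneg
      (mul_nonpos_of_nonneg_of_nonpos (rpow_nonneg ht0.le _) (sub_nonpos.mpr (h t ht)))
      (sq_nonneg _)

theorem isLittleO_rpow_id_atTop {c : ℝ} (hc : c < 1) :
    (fun t : ℝ => t ^ c) =o[atTop] fun t => t := by
  rw [isLittleO_iff_tendsto' (eventually_gt_atTop 0 |>.mono fun t ht h => absurd h ht.ne')]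
  refine (tendsto_rpow_neg_atTop (sub_pos.mpr hc)).congr' ?_
  filter_upwards [eventually_gt_atTop 0] with t ht
  rw [neg_sub, rpow_sub ht, rpow_one]

theorem isLittleO_id_of_mul_deriv_le {u : ℝ → ℝ} {c : ℝ} (hc : c < 1) (hu : Differentiable ℝ u)
    (hnonneg : ∀ᶠ t in atTop, 0 ≤ u t) (h : ∀ᶠ t in atTop, t * deriv u t ≤ c * u t) :
    u =o[atTop] fun t => t := by
  obtain ⟨a, ha⟩ := eventually_atTop.mp (hnonneg.and h)
  set b := max a 1
  have hb : 0 < b := zero_lt_one.trans_le (le_max_right _ _)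
  have hanti := antitoneOn_div_rpow_of_mul_deriv_le hb hu.continuous.continuousOn
    hu.differentiableOn fun t ht => (ha t ((le_max_left _ _).trans ht.le)).2
  refine IsBigO.trans_isLittleO ?_ (isLittleO_rpow_id_atTop hc)
  refine IsBigO.of_bound (u b / b ^ c) ?_
  filter_upwards [eventually_ge_atTop b] with t ht
  have htc : 0 < t ^ c := rpow_pos_of_pos (hb.trans_le ht) c
  rw [norm_of_nonneg (ha t ((le_max_left _ _).trans ht)).1, norm_of_nonneg htc.le,
    ← div_le_iff₀ htc]
  exact hanti self_mem_Ici ht ht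

theorem stmt18_general (t0 u0 : ℝ) (ht0 : 0 < t0)
    (qp : ℝ → ℝ) (u : ℝ → ℝ)
    (hqp_mem : ∀ t ≥ t0, qp t ∈ Set.Icc (0:ℝ) 1)
    (hqp_lim : Tendsto qp atTop (nhds 0))
    (hu : ContDiff ℝ 2 u) (hu_pos : ∀ t ≥ t0, 0 < u t)
    (hu_init : u t0 = u0)
    (hlog : ∀ t ≥ t0, 0 ≤ deriv u t / u t ∧ deriv u t / u t ≤ qp t / t) :
    MonotoneOn u (Set.Ici t0) ∧
    (fun t => u t) =o[atTop] (fun t => t) ∧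
    (∀ t ≥ t0, u t / t ≤ u0 / t0) := by
  have hu' : Differentiable ℝ u := hu.differentiable (by norm_num)
  have hderiv_nonneg : ∀ t ≥ t0, 0 ≤ deriv u t := fun t ht =>
    (div_nonneg_iff.mp (hlog t ht).1).elim (·.1) fun h => absurd h.2 (hu_pos t ht).not_ge
  have hmul : ∀ t ≥ t0, t * deriv u t ≤ qp t * u t := fun t ht => by
    have := (div_le_div_iff₀ (hu_pos t ht) (ht0.trans_le ht)).mp (hlog t ht).2
    linarith
  refine ⟨monotoneOn_of_deriv_nonneg (convex_Ici t0) hu'.continuous.continuousOn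
    hu'.differentiableOn fun t ht => hderiv_nonneg t (interior_subset ht), ?_, fun t ht => ?_⟩
  · refine isLittleO_id_of_mul_deriv_le (c := 1 / 2) (by norm_num) hu'
      ((eventually_ge_atTop t0).mono fun t ht => (hu_pos t ht).le) ?_
    filter_upwards [eventually_ge_atTop t0, hqp_lim.eventually (ge_mem_nhds one_half_pos)]
      with t ht hq
    exact (hmul t ht).trans (mul_le_mul_of_nonneg_right hq (hu_pos t ht).le)
  · have hanti := antitoneOn_div_rpow_of_mul_deriv_le (c := 1) ht0 hu'.continuous.continuousOn
      hu'.differentiableOn fun s hs => (hmul s hs.le).trans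
        (mul_le_mul_of_nonneg_right (hqp_mem s hs.le).2 (hu_pos s hs.le).le)
    simpa [hu_init] using hanti self_mem_Ici ht ht

theorem stmt18 (t0 u0 : ℝ) (ht0 : 0 < t0) (hu0 : 0 < u0)
    (F : ℝ → ℝ → ℝ) (qp : ℝ → ℝ) (u : ℝ → ℝ)
    (hF_cont : Continuous (fun p : ℝ × ℝ => F p.1 p.2))
    (hF_nonneg : ∀ t ≥ t0, ∀ x : ℝ, 0 ≤ F t x)
    (hqp_cont : ContinuousOn qp (Set.Ici t0))
    (hqp_mem : ∀ t ≥ t0, qp t ∈ Set.Icc (0:ℝ) 1)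
    (hqp_lim : Tendsto qp atTop (nhds 0))
    (hu : ContDiff ℝ 2 u) (hu_pos : ∀ t ≥ t0, 0 < u t)
    (hu_init : u t0 = u0)
    (hODE : ∀ t ≥ t0, deriv (deriv u) t + F t (u t) = 0)
    (hlog : ∀ t ≥ t0, 0 ≤ deriv u t / u t ∧ deriv u t / u t ≤ qp t / t) :
    MonotoneOn u (Set.Ici t0) ∧
    (fun t => u t) =o[atTop] (fun t => t) ∧
    (∀ t ≥ t0, u t / t ≤ u0 / t0) :=
  stmt18_general t0 u0 ht0 qp u hqp_mem hqp_lim hu hu_pos hu_init hlog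
end
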